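/- Forgetting universe levels preserves typing judgements: if Γ ⊢ t : s holds in HOL*, then ρ*(Γ) ⊢ ρ*(t) : ρ*(s) holds in HOL. -/

import Mathlib

namespace LeanAuto

/-! ### Terms of `λ→*` / HOL* (and of `λ→` / HOL, as the level-1 fragment),
in de Bruijn representation.  Universe levels are positive naturals. -/

/-- Terms of `λ→*`/HOL* : variables, sorts `U_ℓ` and `U_ℓ'` (`ℓ ∈ ℕ⁺`), the
symbol `Bool`, the logical constants `⊥'`, `→'` and `∀'_s`, applications,
`λ`-abstractions and products.  HOL terms are those whose levels are all 1. -/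
inductive HTm : Type where
  | bvar   : ℕ → HTm
  | sortU  : ℕ+ → HTm
  | sortU' : ℕ+ → HTm
  | bool   : HTm
  | bot    : HTm
  | imp    : HTm
  | allq   : HTm → HTm
  | app    : HTm → HTm → HTm
  | lam    : HTm → HTm → HTm
  | pi     : HTm → HTm → HTm

namespace HTm

/-- de Bruijn shift: add `d` to all variables `≥ c`. -/
def shift (d c : ℕ) : HTm → HTm
  | .bvar k => if k < c then .bvar k else .bvar (k + d)
  | .sortU l => .sortU l
  | .sortU' l => .sortU' l
  | .bool => .bool
  | .bot => .bot
  | .imp => .imp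
  | .allq s => .allq (s.shift d c)
  | .app f a => .app (f.shift d c) (a.shift d c)
  | .lam s b => .lam (s.shift d c) (b.shift d (c + 1))
  | .pi s b => .pi (s.shift d c) (b.shift d (c + 1))

/-- Substitute `u` for variable `j` (decrementing the variables above `j`). -/
def subst (j : ℕ) (u : HTm) : HTm → HTm
  | .bvar k => if k = j then u else if j < k then .bvar (k - 1) else .bvar k
  | .sortU l => .sortU l
  | .sortU' l => .sortU' l
  | .bool => .bool
  | .bot => .bot
  | .imp => .imp
  | .allq s => .allq (subst j u s)
  | .app f a => .app (subst j u f) (subst j u a)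
  | .lam s b => .lam (subst j u s) (subst (j + 1) (u.shift 1 0) b)
  | .pi s b => .pi (subst j u s) (subst (j + 1) (u.shift 1 0) b)

/-- One-step `βη`-reduction (with congruence closure). -/
inductive Step : HTm → HTm → Prop where
  | beta (s b a) : Step (.app (.lam s b) a) (b.subst 0 a)
  | eta (s t) : Step (.lam s (.app (t.shift 1 0) (.bvar 0))) t
  | appL {f f' a} : Step f f' → Step (.app f a) (.app f' a)
  | appR {f a a'} : Step a a' → Step (.app f a) (.app f a')
  | lamTy {s s' b} : Step s s' → Step (.lam s b) (.lam s' b)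
  | lamBody {s b b'} : Step b b' → Step (.lam s b) (.lam s b')
  | piTy {s s' b} : Step s s' → Step (.pi s b) (.pi s' b)
  | piBody {s b b'} : Step b b' → Step (.pi s b) (.pi s b')
  | allqArg {s s'} : Step s s' → Step (.allq s) (.allq s')

/-- `βη`-equivalence: the reflexive-symmetric-transitive closure of `Step`. -/
inductive Conv : HTm → HTm → Prop where
  | step {a b} : Step a b → Conv a b
  | refl (a) : Conv a a
  | symm {a b} : Conv a b → Conv b a
  | trans {a b c} : Conv a b → Conv b c → Conv a c

end HTm

/-- Non-dependent arrow `a → b`. -/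
def arrH (a b : HTm) : HTm := .pi a (b.shift 1 0)

/-- Implication of propositions: `p →' q`. -/
def himp (p q : HTm) : HTm := .app (.app .imp p) q

/-- `∀' (x : s). b`, i.e. `∀'_s (λ (x : s). b)`. -/
def hAll (s b : HTm) : HTm := .app (.allq s) (.lam s b)

/-! ### Typing judgements of HOL and HOL*.

Both systems are presented uniformly, parameterized by a predicate `ok` on
universe levels: HOL is obtained with `ok = (· = 1)` (sorts `U₁`, `U₁'` only),
HOL* with `ok = fun _ => True` (all sorts `U_ℓ`, `U_ℓ'`, `ℓ ∈ ℕ⁺`). -/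

/-- The sorts of the pure type system: `U_ℓ` and `U_ℓ'` for allowed levels. -/
inductive IsHSort (ok : ℕ+ → Prop) : HTm → Prop where
  | u {l} : ok l → IsHSort ok (.sortU l)
  | u' {l} : ok l → IsHSort ok (.sortU' l)

/-- Typing judgement `Γ ⊢ t : s` of HOL (`ok = (· = 1)`) resp. HOL*
(`ok = fun _ => True`): the pure type system rules (axioms, start, weakening,
product, application, abstraction, conversion up to `βη`) for the axioms
`U_ℓ : U_ℓ'` and rules `(U_ℓ, U_m, U_{max(ℓ,m)})`, together with the typing
rules for `Bool`, `⊥'`, `→'` and `∀'_s`.  Contexts are lists of types,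
innermost declaration first. -/
inductive HJ (ok : ℕ+ → Prop) : List HTm → HTm → HTm → Prop where
  | ax {l} : ok l → HJ ok [] (.sortU l) (.sortU' l)
  | boolTy : HJ ok [] .bool (.sortU 1)
  | botTy : HJ ok [] .bot .bool
  | impTy : HJ ok [] .imp (arrH .bool (arrH .bool .bool))
  | allqTy {Γ s l} : ok l → HJ ok Γ s (.sortU l) →
      HJ ok Γ (.allq s) (arrH (arrH s .bool) .bool)
  | start {Γ A s} : HJ ok Γ A s → IsHSort ok s →
      HJ ok (A :: Γ) (.bvar 0) (A.shift 1 0)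
  | weaken {Γ A B C s} : HJ ok Γ A B → HJ ok Γ C s → IsHSort ok s →
      HJ ok (C :: Γ) (A.shift 1 0) (B.shift 1 0)
  | prod {Γ A B l m} : ok l → ok m → HJ ok Γ A (.sortU l) →
      HJ ok (A :: Γ) B (.sortU m) → HJ ok Γ (.pi A B) (.sortU (max l m))
  | appJ {Γ f a A B} : HJ ok Γ f (.pi A B) → HJ ok Γ a A →
      HJ ok Γ (.app f a) (B.subst 0 a)
  | lamJ {Γ A b B s} : HJ ok (A :: Γ) b B → HJ ok Γ (.pi A B) s →
      HJ ok Γ (.lam A b) (.pi A B)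
  | convJ {Γ t A B s} : HJ ok Γ t A → HJ ok Γ B s → IsHSort ok s →
      HTm.Conv A B → HJ ok Γ t B

/-- The level predicate of HOL*: all positive levels are allowed. -/
def holStarLvl : ℕ+ → Prop := fun _ => True

/-- The level predicate of HOL: only level 1 is allowed. -/
def holLvl : ℕ+ → Prop := fun l => l = 1

/-! ### The universe-forgetting map `ρ*` and the lifting maps `ρ_ℓ`. -/

/-- `ρ* : T_→* → T_→` forgets universe levels: it fixes `Bool`, variables,
`⊥'` and `→'`, sends `U_ℓ ↦ U₁`, `U_ℓ' ↦ U₁'`, `∀'_s ↦ ∀'_{ρ*(s)}`, and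
commutes with application and λ-abstraction (and products). -/
def rhoStar : HTm → HTm
  | .bvar k => .bvar k
  | .sortU _ => .sortU 1
  | .sortU' _ => .sortU' 1
  | .bool => .bool
  | .bot => .bot
  | .imp => .imp
  | .allq s => .allq (rhoStar s)
  | .app f a => .app (rhoStar f) (rhoStar a)
  | .lam s b => .lam (rhoStar s) (rhoStar b)
  | .pi s b => .pi (rhoStar s) (rhoStar b)

/-- `ρ_ℓ : T_→ → T_→*` (`ℓ ∈ ℕ⁺`) fixes `Bool`, variables, `⊥'` and `→'`,
sends `U₁ ↦ U_ℓ`, `U₁' ↦ U_ℓ'`, `∀'_s ↦ ∀'_{ρ_ℓ(s)}`, and commutes with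
application and λ-abstraction (and products). -/
def rhoL (l : ℕ+) : HTm → HTm
  | .bvar k => .bvar k
  | .sortU _ => .sortU l
  | .sortU' _ => .sortU' l
  | .bool => .bool
  | .bot => .bot
  | .imp => .imp
  | .allq s => .allq (rhoL l s)
  | .app f a => .app (rhoL l f) (rhoL l a)
  | .lam s b => .lam (rhoL l s) (rhoL l b)
  | .pi s b => .pi (rhoL l s) (rhoL l b)

/-- A term belongs to `T_→` (is a HOL term) iff all its universe levels are 1. -/
def HTm.IsHol : HTm → Prop
  | .bvar _ => True
  | .sortU l => l = 1
  | .sortU' l => l = 1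
  | .bool => True
  | .bot => True
  | .imp => True
  | .allq s => s.IsHol
  | .app f a => f.IsHol ∧ a.IsHol
  | .lam s b => s.IsHol ∧ b.IsHol
  | .pi s b => s.IsHol ∧ b.IsHol

/-! `ρ*` commutes with de Bruijn shifting and substitution, so it maps `βη`-steps to
`βη`-steps. Every instance of a typing rule is then sent to an instance of the same rule
with all universe levels equal to 1; the product rule survives because `max 1 1 = 1`. -/

theorem rhoStar_shift (d c : ℕ) (t : HTm) :
    rhoStar (t.shift d c) = (rhoStar t).shift d c := by
  induction t generalizing c with
  | bvar k => simp only [HTm.shift, rhoStar]; split <;> rfl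
  | _ => simp_all [HTm.shift, rhoStar]

theorem rhoStar_subst (j : ℕ) (u t : HTm) :
    rhoStar (HTm.subst j u t) = HTm.subst j (rhoStar u) (rhoStar t) := by
  induction t generalizing j u with
  | bvar k => simp only [HTm.subst, rhoStar]; split_ifs <;> rfl
  | _ => simp_all [HTm.subst, rhoStar, rhoStar_shift]

theorem rhoStar_arrH (a b : HTm) : rhoStar (arrH a b) = arrH (rhoStar a) (rhoStar b) := by
  simp only [arrH, rhoStar, rhoStar_shift]

theorem HTm.Step.map_rhoStar {a b : HTm} (h : HTm.Step a b) :
    HTm.Step (rhoStar a) (rhoStar b) := by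
  induction h with
  | beta => rw [rhoStar_subst]; exact .beta _ _ _
  | eta => rw [rhoStar, rhoStar, rhoStar, rhoStar_shift]; exact .eta _ _
  | appL _ ih => exact .appL ih
  | appR _ ih => exact .appR ih
  | lamTy _ ih => exact .lamTy ih
  | lamBody _ ih => exact .lamBody ih
  | piTy _ ih => exact .piTy ih
  | piBody _ ih => exact .piBody ih
  | allqArg _ ih => exact .allqArg ih

theorem HTm.Conv.map_rhoStar {a b : HTm} (h : HTm.Conv a b) :
    HTm.Conv (rhoStar a) (rhoStar b) := by
  induction h with
  | step h => exact .step h.map_rhoStar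
  | refl => exact .refl _
  | symm _ ih => exact .symm ih
  | trans _ _ ih₁ ih₂ => exact .trans ih₁ ih₂

theorem IsHSort.map_rhoStar {ok : ℕ+ → Prop} {s : HTm} (h : IsHSort ok s) :
    IsHSort holLvl (rhoStar s) := by
  cases h with
  | u _ => exact .u rfl
  | u' _ => exact .u' rfl

theorem HJ.map_rhoStar {ok : ℕ+ → Prop} {Γ : List HTm} {t s : HTm} (h : HJ ok Γ t s) :
    HJ holLvl (Γ.map rhoStar) (rhoStar t) (rhoStar s) := by
  have one : holLvl 1 := rfl
  induction h with
  | ax _ => exact .ax one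
  | boolTy => exact .boolTy
  | botTy => exact .botTy
  | impTy => simpa only [rhoStar_arrH] using .impTy
  | allqTy _ _ ih => simpa only [rhoStar, rhoStar_arrH] using .allqTy one ih
  | start _ hs ih =>
      simpa only [List.map_cons, rhoStar, rhoStar_shift] using .start ih hs.map_rhoStar
  | weaken _ _ hs ih₁ ih₂ =>
      simpa only [List.map_cons, rhoStar_shift] using .weaken ih₁ ih₂ hs.map_rhoStar
  | prod _ _ _ _ ih₁ ih₂ => simpa only [rhoStar, max_self] using .prod one one ih₁ ih₂
  | appJ _ _ ih₁ ih₂ => simpa only [rhoStar, rhoStar_subst] using .appJ ih₁ ih₂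
  | lamJ _ _ ih₁ ih₂ => exact .lamJ ih₁ ih₂
  | convJ _ _ hs hc ih₁ ih₂ => exact .convJ ih₁ ih₂ hs.map_rhoStar hc.map_rhoStar

/-- Forgetting universe levels preserves typing judgements:
if `Γ ⊢ t : s` holds in HOL*, then `ρ*(Γ) ⊢ ρ*(t) : ρ*(s)` holds in HOL. -/
theorem rhoStar_preserves_typing (Γ : List HTm) (t s : HTm)
    (h : HJ holStarLvl Γ t s) :
    HJ holLvl (Γ.map rhoStar) (rhoStar t) (rhoStar s) :=
  h.map_rhoStar

end LeanAuto
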